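/- arXiv:2401.08942 — 4 statements merged into one kernel-verified Lean document; each statement's English description precedes it below -/
import Mathlib

section
/- Let G be a complete r-partite graph with parts V_1, ..., V_r where V_r is a part of maximum size. If the sum of the sizes of V_1, ..., V_{r-1} equals |V_r| - 1, then G contains a Hamiltonian path. -/
/-!
Put the vertices of the last part at the even positions of a list and all other vertices at
the odd positions. Since the last part has exactly one vertex more than the rest, the list
starts and ends in the last part, so any two consecutive vertices lie in different parts and
are adjacent: the list is the support of a Hamiltonian path.
-/

open SimpleGraph Finset

/-- The kipas `K̂ₙ`: a path on the vertices `0, …, n-1` together with the hub `n`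
joined to every path vertex. -/
def kipas (n : ℕ) : SimpleGraph (Fin (n+1)) :=
  SimpleGraph.fromRel (fun u v => (u.val + 1 = v.val ∧ v.val < n) ∨ (u.val < n ∧ v.val = n))

/-- A monochromatic copy (in color `c`) of the graph `H` in an edge-coloring `χ`
of the complete graph on `V`. -/
def HasMonoCopy {α V C : Type*} (H : SimpleGraph α) (χ : V → V → C) (c : C) : Prop :=
  ∃ f : α ↪ V, ∀ a b, H.Adj a b → χ (f a) (f b) = c

/-- A rainbow copy of the graph `G` in an edge-coloring `χ` of the complete graph on `V`:
distinct edges of the copy receive distinct colors. -/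
def HasRainbowCopy {α V C : Type*} (G : SimpleGraph α) (χ : V → V → C) : Prop :=
  ∃ f : α ↪ V, ∀ a b a' b', G.Adj a b → G.Adj a' b' →
    χ (f a) (f b) = χ (f a') (f b') → s(a, b) = s(a', b')

/-- An edge-coloring uses exactly the colors `1, …, k`. -/
def UsesExactly {V : Type*} (k : ℕ) (χ : V → V → ℕ) : Prop :=
  (∀ u v, u ≠ v → χ u v ∈ Finset.Icc 1 k) ∧
    ∀ c ∈ Finset.Icc 1 k, ∃ u v, u ≠ v ∧ χ u v = c

/-- `grProp G H k N` : every symmetric edge-coloring of `K_{n'}` with `n' ≥ N` using exactly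
`k` colors contains a rainbow copy of `G` or a monochromatic copy of `H`. -/
def grProp {α β : Type*} (G : SimpleGraph α) (H : SimpleGraph β) (k N : ℕ) : Prop :=
  ∀ n, N ≤ n → ∀ χ : Fin n → Fin n → ℕ, (∀ u v, χ u v = χ v u) →
    UsesExactly k χ → HasRainbowCopy G χ ∨ ∃ c, HasMonoCopy H χ c

/-- A monochromatic (color `c`) linear forest, all of whose components are paths on at
least `t` vertices, with at least `m` edges in total. -/
def HasMonoLinearForest {V C : Type*} (χ : V → V → C) (c : C) (t m : ℕ) : Prop :=
  ∃ paths : List (List V),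
    paths.flatten.Nodup ∧
    (∀ p ∈ paths, t ≤ p.length) ∧
    (∀ p ∈ paths, p.Chain' (fun u v => χ u v = c)) ∧
    m ≤ (paths.map (fun p => p.length - 1)).sum

namespace List

variable {α : Type*}

def alternate : List α → List α → List α
  | [], l => l
  | a :: l₁, l₂ => a :: alternate l₂ l₁
termination_by l₁ l₂ => l₁.length + l₂.length

theorem alternate_perm_append (l₁ l₂ : List α) : alternate l₁ l₂ ~ l₁ ++ l₂ := by
  fun_induction alternate l₁ l₂ with
  | case1 l => simp
  | case2 a l₁ l₂ ih =>
    exact (ih.trans perm_append_comm).cons a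

theorem isChain_alternate {R : α → α → Prop} (hR : Std.Symm R) {l₁ l₂ : List α}
    (hrel : ∀ a ∈ l₁, ∀ b ∈ l₂, R a b) (hlen₂ : l₂.length ≤ l₁.length)
    (hlen₁ : l₁.length ≤ l₂.length + 1) : (alternate l₁ l₂).IsChain R := by
  fun_induction alternate l₁ l₂ with
  | case1 l => simp_all
  | case2 a l₁ l₂ ih =>
    have hrest := ih (fun b hb a' ha' => hR.symm _ _ (hrel a' (by simp [ha']) b hb))
      (by simpa using hlen₁) (by simpa using hlen₂)
    match l₂, l₁ with
    | [], [] => simp [alternate]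
    | [], _ :: _ => simp at hlen₁
    | b :: l₂, l₁ =>
      rw [alternate] at hrest ⊢
      exact hrest.cons_cons (hrel a (by simp) b (by simp))

end List

namespace SimpleGraph

variable {V : Type*} {G : SimpleGraph V}

theorem exists_isHamiltonian_of_isChain [DecidableEq V] {l : List V} (hne : l ≠ [])
    (hchain : l.IsChain G.Adj) (hnodup : l.Nodup) (hmem : ∀ v, v ∈ l) :
    ∃ (u v : V) (p : G.Walk u v), p.IsHamiltonian := by
  refine ⟨_, _, Walk.ofSupport l hne hchain, ?_⟩
  exact Walk.IsPath.isHamiltonian_of_mem (by simpa [Walk.isPath_def] using hnodup)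
    (by simpa using hmem)

theorem exists_isHamiltonian_of_card_eq_card_compl_add_one [Fintype V] [DecidableEq V]
    (B : Finset V) (hcard : #B = #Bᶜ + 1) (hadj : ∀ b ∈ B, ∀ c ∉ B, G.Adj b c) :
    ∃ (u v : V) (p : G.Walk u v), p.IsHamiltonian := by
  have hperm := List.alternate_perm_append B.toList Bᶜ.toList
  refine exists_isHamiltonian_of_isChain (l := List.alternate B.toList Bᶜ.toList) ?_ ?_ ?_ ?_
  · exact List.ne_nil_of_length_pos (by rw [hperm.length_eq]; simp [hcard])
  · exact List.isChain_alternate G.symm (by simpa using hadj) (by simp [hcard]) (by simp [hcard])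
  · refine hperm.nodup_iff.mpr (List.nodup_append.mpr ⟨B.nodup_toList, Bᶜ.nodup_toList, ?_⟩)
    simpa using fun a ha b hb => ne_of_mem_of_not_mem ha hb
  · intro v
    simpa [hperm.mem_iff] using em (v ∈ B)

end SimpleGraph

theorem completeMultipartite_hamiltonianPath_general (r : ℕ) (n : Fin (r+1) → ℕ)
    (hsum : (∑ i : Fin r, n i.castSucc) + 1 = n (Fin.last r)) :
    ∃ (u v : Σ i, Fin (n i)) (p : (completeMultipartiteGraph (fun i => Fin (n i))).Walk u v),
      p.IsHamiltonian := by
  let B : Finset (Σ i, Fin (n i)) := ({Fin.last r} : Finset _).sigma fun _ => univ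
  have hB : #B = n (Fin.last r) := by simp [B]
  have hBc : #Bᶜ = ∑ i : Fin r, n i.castSucc := by
    rw [card_compl, hB, Fintype.card_sigma, Fin.sum_univ_castSucc]
    simp
  refine exists_isHamiltonian_of_card_eq_card_compl_add_one B (by omega) ?_
  intro b hb c hc
  simp only [B, mem_sigma, mem_singleton, mem_univ, and_true] at hb hc
  simpa [hb] using Ne.symm hc

/-- A complete multipartite graph whose parts are all nonempty, whose last part
has maximum size, and where the sizes of the other parts sum to exactly the size of the last
part minus one, contains a Hamiltonian path. -/
theorem completeMultipartite_hamiltonianPath (r : ℕ) (n : Fin (r+1) → ℕ)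
    (hpos : ∀ i, 1 ≤ n i)
    (hmax : ∀ i, n i ≤ n (Fin.last r))
    (hsum : (∑ i : Fin r, n i.castSucc) + 1 = n (Fin.last r)) :
    ∃ (u v : Σ i, Fin (n i)) (p : (completeMultipartiteGraph (fun i => Fin (n i))).Walk u v),
      p.IsHamiltonian :=
  completeMultipartite_hamiltonianPath_general r n hsum
end

section
/- For n ≥ 4, if the edges of the complete graph on n+1 vertices are 2-colored red/blue and there is no red copy of the kipas K̂_n, then there is either a blue copy of two vertex-disjoint edges (2P_2) or a blue path on 3 vertices (P_3). -/
open SimpleGraph Finset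

/-! Without a blue `2P₂` or blue `P₃`, any two blue edges coincide, so at most one pair of
vertices is blue. The kipas `K̂ₙ` (`n ≥ 3`) misses the pair `{0, 2}`; relabelling the vertices
so that the blue edge, if any, lands on this non-edge makes every edge of the copy red. -/

theorem Equiv.Perm.exists_apply_eq_and_apply_eq {V : Type*} [DecidableEq V] {a b x y : V}
    (hab : a ≠ b) (hxy : x ≠ y) : ∃ σ : Equiv.Perm V, σ a = x ∧ σ b = y := by
  have hb : Equiv.swap a x b ≠ x := by
    rw [Ne, Equiv.swap_apply_eq_iff, Equiv.swap_apply_right]; exact hab.symm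
  refine ⟨(Equiv.swap a x).trans (Equiv.swap (Equiv.swap a x b) y), ?_, ?_⟩
  · simp only [Equiv.trans_apply, Equiv.swap_apply_left]
    exact Equiv.swap_apply_of_ne_of_ne hb.symm hxy
  · simp only [Equiv.trans_apply, Equiv.swap_apply_left]

theorem hasMonoCopy_of_not_adj {V C : Type*} {H : SimpleGraph V} {χ : V → V → C} {c : C}
    {a b x y : V} (hab : a ≠ b) (hnadj : ¬ H.Adj a b) (hxy : x ≠ y)
    (hχ : ∀ u v, u ≠ v → χ u v ≠ c → s(u, v) = s(x, y)) : HasMonoCopy H χ c := by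
  classical
  obtain ⟨σ, hσa, hσb⟩ := Equiv.Perm.exists_apply_eq_and_apply_eq hab hxy
  refine ⟨σ.toEmbedding, fun u v huv => ?_⟩
  by_contra hc
  have huv' : s(u, v) = s(a, b) := Sym2.map.injective σ.injective <| by
    simpa [hσa, hσb] using hχ (σ u) (σ v) (σ.injective.ne huv.ne) hc
  exact hnadj (H.mem_edgeSet.1 (huv' ▸ H.mem_edgeSet.2 huv))

theorem kipas_not_adj_zero_two {n : ℕ} (hn : 3 ≤ n) : ¬ (kipas n).Adj 0 ⟨2, by omega⟩ := by
  simp only [kipas, fromRel_adj, Fin.val_zero]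
  omega

section
variable {V C : Type*} {χ : V → V → C} {c : C}

theorem eq_of_no_mono_P3 (hsym : ∀ u v, χ u v = χ v u)
    (hP3 : ∀ a b d : V, [a, b, d].Nodup → χ a b = c → χ b d ≠ c)
    {u v w : V} (huv : u ≠ v) (huw : u ≠ w) (hv : χ u v = c) (hw : χ u w = c) : v = w := by
  by_contra hvw
  exact hP3 v u w (by simp [huv.symm, huw, hvw]) (hsym v u ▸ hv) hw

theorem sym2_eq_of_no_mono_2P2_P3 (hsym : ∀ u v, χ u v = χ v u)
    (h2P2 : ∀ a b d e : V, [a, b, d, e].Nodup → χ a b = c → χ d e ≠ c)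
    (hP3 : ∀ a b d : V, [a, b, d].Nodup → χ a b = c → χ b d ≠ c)
    {u v u' v' : V} (huv : u ≠ v) (hu'v' : u' ≠ v') (h : χ u v = c) (h' : χ u' v' = c) :
    s(u, v) = s(u', v') := by
  have hvu := hsym u v ▸ h
  have hv'u' := hsym u' v' ▸ h'
  by_cases e1 : u = u'
  · subst e1; rw [eq_of_no_mono_P3 hsym hP3 huv hu'v' h h']
  by_cases e2 : u = v'
  · subst e2; rw [eq_of_no_mono_P3 hsym hP3 huv hu'v'.symm h hv'u', Sym2.eq_swap]
  by_cases e3 : v = u'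
  · subst e3; rw [eq_of_no_mono_P3 hsym hP3 huv.symm hu'v' hvu h', Sym2.eq_swap]
  by_cases e4 : v = v'
  · subst e4; rw [eq_of_no_mono_P3 hsym hP3 huv.symm hu'v'.symm hvu hv'u']
  exact absurd h' (h2P2 u v u' v' (by simp [*]) h)

end

/-- For `n ≥ 4`, any red/blue coloring of `K_{n+1}` (red = `true`) without a red
kipas `K̂ₙ` contains a blue `2P₂` or a blue `P₃`. -/
theorem blue_2P2_or_P3 (n : ℕ) (hn : 4 ≤ n)
    (χ : Fin (n+1) → Fin (n+1) → Bool) (hsym : ∀ u v, χ u v = χ v u)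
    (hred : ¬ HasMonoCopy (kipas n) χ true) :
    (∃ a b c d : Fin (n+1), [a, b, c, d].Nodup ∧ χ a b = false ∧ χ c d = false) ∨
    (∃ a b c : Fin (n+1), [a, b, c].Nodup ∧ χ a b = false ∧ χ b c = false) := by
  by_contra! ⟨h2P2, hP3⟩
  have h02 : (0 : Fin (n+1)) ≠ ⟨2, by omega⟩ := by simp [Fin.ext_iff]
  obtain ⟨x, y, hxy, hblue⟩ : ∃ x y : Fin (n+1), x ≠ y ∧
      ∀ u v, u ≠ v → χ u v ≠ true → s(u, v) = s(x, y) := by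
    by_cases hex : ∃ x y, x ≠ y ∧ χ x y = false
    · obtain ⟨x, y, hxy, hxy_blue⟩ := hex
      exact ⟨x, y, hxy, fun u v huv huv_blue => sym2_eq_of_no_mono_2P2_P3 hsym h2P2 hP3
        huv hxy (by simpa using huv_blue) hxy_blue⟩
    · push Not at hex
      exact ⟨_, _, h02, fun u v huv huv_blue => absurd (hex u v huv) (by simpa using huv_blue)⟩
  exact hred (hasMonoCopy_of_not_adj h02 (kipas_not_adj_zero_two (by omega)) hxy hblue)
end

section
/- For n ≥ 5, if the edges of the complete graph on n+2 vertices are 2-colored red/blue and there is no red copy of the kipas K̂_n, then there is a blue copy of one of: two vertex-disjoint paths P_3 ∪ P_3, a path P_5 on five vertices, or vertex-disjoint paths P_4 ∪ P_2. -/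
open SimpleGraph Finset

/-!
Let `G` be the blue graph. Without a blue `P₅`, `2P₃` or `P₄ ∪ P₂` it is very restricted:
either some vertex `v` lies on every blue `P₃` (so `G - v` is a matching), or there is a blue
`P₄` and all blue edges lie inside its four vertices. In each case we find a hub `h` with at
most one blue neighbour `x` such that the other `n` vertices carry a red Hamiltonian path; with
`h` this is a red kipas. The path exists because the complement of a matching on at least three
vertices is traceable, and three vertices completely red-joined to at least two others can be
interleaved with them. When `G - v` is a perfect matching, `v` has blue neighbours only inside
one matching edge `pq` (a second one would give a blue `P₅`), so any other vertex `h`, with `x`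
its partner, leaves `v`, `p`, `q` red-joined to the rest.
-/

theorem List.exists_notMem_of_length_lt_card {V : Type*} [Fintype V] (l : List V)
    (hl : l.length < Fintype.card V) : ∃ y, y ∉ l :=
  Cardinal.exists_notMem_of_length_lt l (by rwa [Cardinal.mk_fintype, Nat.cast_lt])

namespace SimpleGraph

variable {V : Type*}

theorem kipas_isContained_of_isChain {H : SimpleGraph V} {l : List V} {h : V} (hl : l.Nodup)
    (hchain : l.IsChain H.Adj) (hhl : h ∉ l) (hhub : ∀ x ∈ l, H.Adj h x) :
    kipas l.length ⊑ H := by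
  let f : Fin (l.length + 1) → V := fun i => if hi : i.val < l.length then l[i.val] else h
  have hf_path (i : Fin (l.length + 1)) (hi : i.val < l.length) : f i = l[i.val] := dif_pos hi
  have hf_hub (i : Fin (l.length + 1)) (hi : i.val = l.length) : f i = h := dif_neg (by omega)
  have hinj : Function.Injective f := by
    intro i j hij
    by_cases hi : i.val < l.length <;> by_cases hj : j.val < l.length
    · rw [hf_path i hi, hf_path j hj, hl.getElem_inj_iff] at hij
      exact Fin.ext hij
    · rw [hf_path i hi, hf_hub j (by omega)] at hij
      exact (hhl (hij ▸ l.getElem_mem hi)).elim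
    · rw [hf_hub i (by omega), hf_path j hj] at hij
      exact (hhl (hij ▸ l.getElem_mem hj)).elim
    · exact Fin.ext (by omega)
  have hpath (i j : Fin (l.length + 1)) (hij : i.val + 1 = j.val) (hj : j.val < l.length) :
      H.Adj (f i) (f j) := by
    rw [hf_path i (by omega), hf_path j hj]
    simp only [← hij]
    exact List.isChain_iff_getElem.1 hchain i (by omega)
  have hspoke (i j : Fin (l.length + 1)) (hi : i.val < l.length) (hj : j.val = l.length) :
      H.Adj (f i) (f j) := by
    rw [hf_path i hi, hf_hub j hj]
    exact (hhub _ (l.getElem_mem hi)).symm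
  refine ⟨⟨⟨f, fun {i j} hij => ?_⟩, hinj⟩⟩
  rw [kipas, fromRel_adj] at hij
  obtain ⟨-, (⟨hij, hj⟩ | ⟨hi, hj⟩) | (⟨hji, hi⟩ | ⟨hj, hi⟩)⟩ := hij
  · exact hpath i j hij hj
  · exact hspoke i j hi hj
  · exact (hpath j i hji hi).symm
  · exact (hspoke j i hj hi).symm

/-- The edges of `G` inside `s` form a matching, not necessarily perfect. -/
def IsMatchingOn (G : SimpleGraph V) (s : Set V) : Prop :=
  ∀ ⦃x y z⦄, x ∈ s → y ∈ s → z ∈ s → G.Adj x y → G.Adj x z → y = z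

theorem IsMatchingOn.mono {G : SimpleGraph V} {s t : Set V} (h : G.IsMatchingOn t) (hst : s ⊆ t) :
    G.IsMatchingOn s :=
  fun _ _ _ hx hy hz => h (hst hx) (hst hy) (hst hz)

section Hamiltonian

variable [DecidableEq V] {G : SimpleGraph V}

theorem exists_isChain_compl_or_eq_pair {s : Finset V} (hs : G.IsMatchingOn s)
    (hne : s.Nonempty) :
    (∃ l : List V, l.Nodup ∧ l.toFinset = s ∧ l.IsChain Gᶜ.Adj) ∨
      ∃ a b, s = {a, b} ∧ G.Adj a b := by
  induction s using Finset.induction_on with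
  | empty => simp at hne
  | insert x s hx ih =>
    rcases s.eq_empty_or_nonempty with rfl | hne
    · exact .inl ⟨[x], by simp, by simp, .singleton x⟩
    rcases ih (hs.mono (by simp)) hne with ⟨l, hl, hls, hchain⟩ | ⟨a, b, rfl, hab⟩
    · have hxl : x ∉ l := by rwa [← List.mem_toFinset, hls]
      subst hls
      obtain ⟨a, t, rfl⟩ := List.exists_cons_of_ne_nil (l := l) (by rintro rfl; simp at hne)
      have hxa : x ≠ a := by grind
      by_cases hGxa : G.Adj x a
      · by_cases hGxe : G.Adj x ((a :: t).getLast (List.cons_ne_nil a t))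
        · -- `x` has two neighbours, the ends of the path, so these coincide
          have hae := hs (by simp) (by simp)
            (mem_insert_of_mem (List.mem_toFinset.2 (List.getLast_mem _))) hGxa hGxe
          obtain rfl : t = [] := by
            by_contra ht
            rw [List.getLast_cons ht] at hae
            exact (List.nodup_cons.1 hl).1 (hae ▸ List.getLast_mem ht)
          exact .inr ⟨x, a, by simp, hGxa⟩
        · refine .inl ⟨a :: t ++ [x], ?_, by ext; simp [or_left_comm], ?_⟩
          · exact (List.perm_append_singleton x _).nodup_iff.2 (hl.cons hxl)
          · refine hchain.append (.singleton x) fun e he y hy => ?_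
            rw [List.getLast?_eq_some_getLast (List.cons_ne_nil a t), Option.mem_some_iff] at he
            rw [List.head?_cons, Option.mem_some_iff] at hy
            subst he hy
            exact ⟨fun h => hxl (h ▸ List.getLast_mem _), fun h => hGxe h.symm⟩
      · exact .inl ⟨x :: a :: t, hl.cons hxl, by simp,
          hchain.cons (by simpa using ⟨hxa, hGxa⟩)⟩
    · simp only [mem_insert, mem_singleton, not_or] at hx
      obtain ⟨hxa, hxb⟩ := hx
      have hGax : ¬G.Adj a x := fun h => hxb (hs (by simp) (by simp) (by simp) h hab)
      have hGbx : ¬G.Adj b x := fun h => hxa (hs (by simp) (by simp) (by simp) h hab.symm)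
      refine .inl ⟨[a, x, b], by grind [Adj.ne], by ext; simp [or_left_comm], ?_⟩
      simp only [List.isChain_cons_cons, List.isChain_singleton, and_true]
      exact ⟨⟨Ne.symm hxa, hGax⟩, ⟨hxb, fun h => hGbx h.symm⟩⟩

theorem exists_isChain_compl_of_three_le_card {s : Finset V} (hs : G.IsMatchingOn s)
    (h3 : 3 ≤ #s) : ∃ l : List V, l.Nodup ∧ l.toFinset = s ∧ l.IsChain Gᶜ.Adj := by
  rcases exists_isChain_compl_or_eq_pair hs (card_pos.1 (by omega)) with hl | ⟨a, b, rfl, -⟩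
  · exact hl
  · have := card_le_two (a := a) (b := b)
    omega

theorem exists_cons_isChain_compl {D : Finset V} (hD : G.IsMatchingOn D) (h2 : 2 ≤ #D) :
    ∃ y Y, Y ≠ [] ∧ (y :: Y).Nodup ∧ (y :: Y).toFinset = D ∧ Y.IsChain Gᶜ.Adj := by
  rcases exists_isChain_compl_or_eq_pair hD (card_pos.1 (by omega)) with
    ⟨l, hl, hlD, hchain⟩ | ⟨a, b, rfl, hab⟩
  · obtain ⟨y, Y, rfl⟩ := List.exists_cons_of_ne_nil (l := l)
      (by rintro rfl; simp [← hlD] at h2)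
    refine ⟨y, Y, ?_, hl, hlD, hchain.tail⟩
    rintro rfl
    simp [← hlD] at h2
  · exact ⟨a, [b], List.cons_ne_nil _ _, by simp [hab.ne], by simp, .singleton b⟩

theorem exists_isChain_compl_of_join {D : Finset V} {t₁ t₂ t₃ : V} (hD : G.IsMatchingOn D)
    (h2 : 2 ≤ #D) (ht : [t₁, t₂, t₃].Nodup)
    (hjoin : ∀ t ∈ [t₁, t₂, t₃], ∀ y ∈ D, Gᶜ.Adj t y) :
    ∃ l : List V, l.Nodup ∧ l.toFinset = {t₁, t₂, t₃} ∪ D ∧ l.IsChain Gᶜ.Adj := by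
  obtain ⟨y, Y, hY, hnd, hyY, hchain⟩ := exists_cons_isChain_compl hD h2
  have hadj {t} (ht : t ∈ [t₁, t₂, t₃]) {z} (hz : z ∈ y :: Y) : Gᶜ.Adj t z :=
    hjoin t ht z (by rw [← hyY]; exact List.mem_toFinset.2 hz)
  have h₁ : t₁ ∉ y :: Y := fun h => (hadj (by simp) h).ne rfl
  have h₂ : t₂ ∉ y :: Y := fun h => (hadj (by simp) h).ne rfl
  have h₃ : t₃ ∉ y :: Y := fun h => (hadj (by simp) h).ne rfl
  -- `y` is flanked by terminals, so it need not be red to the head of `Y`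
  refine ⟨t₁ :: y :: t₃ :: (Y ++ [t₂]), ?_, ?_, ?_⟩
  · simp only [List.nodup_cons, List.mem_cons, List.not_mem_nil] at ht hnd h₁ h₂ h₃ ⊢
    grind
  · rw [← hyY]
    ext
    grind [List.mem_toFinset]
  · simp only [List.isChain_cons_cons]
    refine ⟨hadj (by simp) (by simp), (hadj (by simp) (by simp)).symm, ?_⟩
    refine (hchain.append (.singleton t₂) fun z hz w hw => ?_).cons fun z hz => ?_
    · rw [List.head?_cons, Option.mem_some_iff] at hw
      subst hw
      exact (hadj (by simp) (List.mem_cons_of_mem _ (List.mem_of_mem_getLast? hz))).symm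
    · rw [List.head?_append_of_ne_nil _ hY] at hz
      exact hadj (by simp) (List.mem_cons_of_mem _ (List.mem_of_mem_head? hz))

end Hamiltonian

def FreeOfP5 (G : SimpleGraph V) : Prop :=
  ∀ a b c d e, [a, b, c, d, e].Nodup →
    G.Adj a b → G.Adj b c → G.Adj c d → G.Adj d e → False

def FreeOf2P3 (G : SimpleGraph V) : Prop :=
  ∀ a b c d e f, [a, b, c, d, e, f].Nodup →
    G.Adj a b → G.Adj b c → G.Adj d e → G.Adj e f → False

def FreeOfP4P2 (G : SimpleGraph V) : Prop :=
  ∀ a b c d e f, [a, b, c, d, e, f].Nodup →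
    G.Adj a b → G.Adj b c → G.Adj c d → G.Adj e f → False

section Structure

variable {G : SimpleGraph V}

theorem exists_path4_of_not_isMatchingOn (h2P3 : G.FreeOf2P3) {x y z : V} (hxy : G.Adj x y)
    (hyz : G.Adj y z) (hxz : x ≠ z) (hy : ¬G.IsMatchingOn {y}ᶜ) :
    ∃ a b c d, [a, b, c, d].Nodup ∧ G.Adj a b ∧ G.Adj b c ∧ G.Adj c d := by
  obtain ⟨c, p, q, hc, hp, hq, hcp, hcq, hpq⟩ :
      ∃ c p q, c ≠ y ∧ p ≠ y ∧ q ≠ y ∧ G.Adj c p ∧ G.Adj c q ∧ p ≠ q := by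
    simpa [IsMatchingOn] using hy
  have pendant (u w : V) (hu : u = x ∨ u = z) (huw : G.Adj u w)
      (hw : w ≠ x ∧ w ≠ y ∧ w ≠ z) :
      ∃ a b c d, [a, b, c, d].Nodup ∧ G.Adj a b ∧ G.Adj b c ∧ G.Adj c d := by
    rcases hu with rfl | rfl
    · exact ⟨z, y, u, w, by grind [Adj.ne], hyz.symm, hxy.symm, huw⟩
    · exact ⟨x, y, u, w, by grind [Adj.ne], hxy, hyz, huw⟩
  by_cases hcxz : c = x ∨ c = z
  · have : (p ≠ x ∧ p ≠ z) ∨ (q ≠ x ∧ q ≠ z) := by grind [Adj.ne]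
    rcases this with hpxz | hqxz
    · exact pendant c p hcxz hcp ⟨hpxz.1, hp, hpxz.2⟩
    · exact pendant c q hcxz hcq ⟨hqxz.1, hq, hqxz.2⟩
  by_cases hpxz : p = x ∨ p = z
  · exact pendant p c hpxz hcp.symm (by grind)
  by_cases hqxz : q = x ∨ q = z
  · exact pendant q c hqxz hcq.symm (by grind)
  exact (h2P3 x y z p c q (by grind [Adj.ne]) hxy hyz hcp.symm hcq).elim

variable {a b c d : V}

theorem eq_or_eq_of_adj_of_notMem_path4 (hP5 : G.FreeOfP5) (hP4P2 : G.FreeOfP4P2)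
    (habcd : [a, b, c, d].Nodup) (hab : G.Adj a b) (hbc : G.Adj b c) (hcd : G.Adj c d) {x y : V}
    (hx : x ∉ [a, b, c, d]) (hxy : G.Adj x y) : y = b ∨ y = c := by
  simp only [List.mem_cons, List.not_mem_nil, or_false, not_or] at hx
  by_contra! hy
  by_cases hya : y = a
  · subst hya
    exact hP5 x y b c d (by grind [Adj.ne]) hxy hab hbc hcd
  by_cases hyd : y = d
  · subst hyd
    exact hP5 a b c y x (by grind [Adj.ne]) hab hbc hcd hxy.symm
  exact hP4P2 a b c d x y (by grind [Adj.ne]) hab hbc hcd hxy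

theorem isMatchingOn_compl_singleton_of_path4 (hP5 : G.FreeOfP5) (hP4P2 : G.FreeOfP4P2)
    (habcd : [a, b, c, d].Nodup) (hab : G.Adj a b) (hbc : G.Adj b c) (hcd : G.Adj c d) {w : V}
    (hw : w ∉ [a, b, c, d]) (hbw : G.Adj b w) (hc : ∀ w ∉ [a, b, c, d], ¬G.Adj c w) :
    G.IsMatchingOn {b}ᶜ := by
  have hw' := hw
  simp only [List.mem_cons, List.not_mem_nil, or_false, not_or] at hw'
  have hac : ¬G.Adj a c := fun h => hP5 w b a c d (by grind [Adj.ne]) hbw.symm hab.symm h hcd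
  have had : ¬G.Adj a d := fun h => hP5 w b c d a (by grind [Adj.ne]) hbw.symm hbc hcd h.symm
  have hmem {u v : V} (hv : v ≠ b) (huv : G.Adj u v) : u ∈ [a, b, c, d] := by
    by_contra hu
    rcases eq_or_eq_of_adj_of_notMem_path4 hP5 hP4P2 habcd hab hbc hcd hu huv with rfl | rfl
    exacts [hv rfl, hc u hu huv.symm]
  have hcd_only {u v : V} (hu : u ≠ b) (hv : v ≠ b) (huv : G.Adj u v) : u = c ∨ u = d := by
    have hu' := hmem hv huv
    have hv' := hmem hu huv.symm
    simp only [List.mem_cons, List.not_mem_nil, or_false] at hu' hv'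
    grind [Adj.ne]
  intro x y z hx hy hz hxy hxz
  simp only [Set.mem_compl_iff, Set.mem_singleton_iff] at hx hy hz
  have hx' := hcd_only hx hy hxy
  have hy' := hcd_only hy hx hxy.symm
  have hz' := hcd_only hz hx hxz.symm
  grind [Adj.ne]

theorem exists_isMatchingOn_compl_or_forall_mem_of_path4 (hP5 : G.FreeOfP5) (h2P3 : G.FreeOf2P3)
    (hP4P2 : G.FreeOfP4P2) (habcd : [a, b, c, d].Nodup) (hab : G.Adj a b) (hbc : G.Adj b c)
    (hcd : G.Adj c d) :
    (∃ v, G.IsMatchingOn {v}ᶜ) ∨ ∀ x y, G.Adj x y → x ∈ [a, b, c, d] := by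
  have hdcba : [d, c, b, a].Nodup := List.nodup_reverse.2 habcd
  by_cases hb : ∃ w ∉ [a, b, c, d], G.Adj b w <;>
    by_cases hc : ∃ w ∉ [a, b, c, d], G.Adj c w
  · obtain ⟨w, hw, hbw⟩ := hb
    obtain ⟨w', hw', hcw'⟩ := hc
    simp only [List.mem_cons, List.not_mem_nil, or_false, not_or] at hw hw'
    by_cases hww' : w = w'
    · subst hww'
      exact (hP5 a b w c d (by grind [Adj.ne]) hab hbw hcw'.symm hcd).elim
    · exact (h2P3 a b w d c w' (by grind [Adj.ne]) hab hbw hcd.symm hcw').elim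
  · obtain ⟨w, hw, hbw⟩ := hb
    push Not at hc
    exact .inl ⟨b, isMatchingOn_compl_singleton_of_path4 hP5 hP4P2 habcd hab hbc hcd hw hbw hc⟩
  · obtain ⟨w, hw, hcw⟩ := hc
    push Not at hb
    refine .inl ⟨c, isMatchingOn_compl_singleton_of_path4 hP5 hP4P2 hdcba hcd.symm hbc.symm
      hab.symm (fun h => hw (List.mem_reverse.1 h)) hcw
      fun w hw => hb w fun h => hw (List.mem_reverse.2 h)⟩
  · push Not at hb hc
    refine .inr fun x y hxy => ?_
    by_contra hx
    rcases eq_or_eq_of_adj_of_notMem_path4 hP5 hP4P2 habcd hab hbc hcd hx hxy with rfl | rfl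
    exacts [hb x hx hxy.symm, hc x hx hxy.symm]

theorem exists_isMatchingOn_compl_or_forall_mem [Nonempty V] (hP5 : G.FreeOfP5) (h2P3 : G.FreeOf2P3)
    (hP4P2 : G.FreeOfP4P2) :
    (∃ v, G.IsMatchingOn {v}ᶜ) ∨
      ∃ a b c d, [a, b, c, d].Nodup ∧ ∀ x y, G.Adj x y → x ∈ [a, b, c, d] := by
  by_cases hP3 : ∃ x y z, G.Adj x y ∧ G.Adj y z ∧ x ≠ z
  · obtain ⟨x, y, z, hxy, hyz, hxz⟩ := hP3
    by_cases hy : G.IsMatchingOn {y}ᶜ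
    · exact .inl ⟨y, hy⟩
    obtain ⟨a, b, c, d, habcd, hab, hbc, hcd⟩ :=
      exists_path4_of_not_isMatchingOn h2P3 hxy hyz hxz hy
    exact (exists_isMatchingOn_compl_or_forall_mem_of_path4 hP5 h2P3 hP4P2 habcd hab hbc
      hcd).imp_right fun h => ⟨a, b, c, d, habcd, h⟩
  · refine .inl ⟨Classical.arbitrary V, fun x y z _ _ _ hxy hxz => ?_⟩
    by_contra hyz
    exact hP3 ⟨y, x, z, hxy.symm, hxz, hyz⟩

end Structure

section Fintype

variable [Fintype V] [DecidableEq V]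

theorem kipas_isContained_of_hub {H : SimpleGraph V} {n : ℕ} (hV : Fintype.card V = n + 2)
    {h x : V} (hhx : h ≠ x) {l : List V} (hl : l.Nodup) (hls : l.toFinset = {h, x}ᶜ)
    (hchain : l.IsChain H.Adj) (hhub : ∀ y, y ≠ h → y ≠ x → H.Adj h y) :
    kipas n ⊑ H := by
  have hlen : l.length = n := by
    rw [← List.toFinset_card_of_nodup hl, hls, card_compl, card_pair hhx, hV]
    rfl
  have hmem {y} (hy : y ∈ l) : y ≠ h ∧ y ≠ x := by
    simpa [← List.mem_toFinset, hls] using hy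
  subst hlen
  exact kipas_isContained_of_isChain hl hchain (fun hh => (hmem hh).1 rfl)
    fun y hy => hhub y (hmem hy).1 (hmem hy).2

variable {G : SimpleGraph V} {n : ℕ}

theorem kipas_isContained_compl_of_isolated (hn : 3 ≤ n) (hV : Fintype.card V = n + 2)
    {v h : V} (hv : G.IsMatchingOn {v}ᶜ) (hhv : h ≠ v) (hh : ∀ y, y ≠ v → ¬G.Adj h y) :
    kipas n ⊑ Gᶜ := by
  obtain ⟨l, hl, hls, hchain⟩ := exists_isChain_compl_of_three_le_card (s := {h, v}ᶜ)
    (hv.mono (by simp)) (by rw [card_compl, card_pair hhv]; omega)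
  exact kipas_isContained_of_hub hV hhv hl hls hchain fun y hyh hyv => ⟨Ne.symm hyh, hh y hyv⟩

theorem kipas_isContained_compl_of_terminals (hn : 5 ≤ n) (hV : Fintype.card V = n + 2)
    {h x t₁ t₂ t₃ : V} (hnd : [h, x, t₁, t₂, t₃].Nodup)
    (hhub : ∀ y, y ≠ h → y ≠ x → ¬G.Adj h y)
    (hD : G.IsMatchingOn ↑({h, x, t₁, t₂, t₃} : Finset V)ᶜ)
    (hjoin : ∀ t ∈ [t₁, t₂, t₃], ∀ y ∈ ({h, x, t₁, t₂, t₃} : Finset V)ᶜ,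
      ¬G.Adj t y) :
    kipas n ⊑ Gᶜ := by
  have hcard : 2 ≤ #({h, x, t₁, t₂, t₃} : Finset V)ᶜ := by
    have := card_le_five (a := h) (b := x) (c := t₁) (d := t₂) (e := t₃)
    rw [card_compl, hV]
    omega
  simp only [List.nodup_cons, List.mem_cons, List.not_mem_nil] at hnd
  obtain ⟨l, hl, hls, hchain⟩ := exists_isChain_compl_of_join hD hcard (by grind)
    fun t ht y hy => ⟨ne_of_mem_of_not_mem (by grind) (mem_compl.1 hy), hjoin t ht y hy⟩
  refine kipas_isContained_of_hub hV (by grind) hl ?_ hchain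
    fun y hyh hyx => ⟨Ne.symm hyh, hhub y hyh hyx⟩
  rw [hls]
  ext
  grind [mem_compl]

theorem exists_adj_forall_adj_eq_or_eq [Nontrivial V] (hP5 : G.FreeOfP5) {v : V}
    (hv : G.IsMatchingOn {v}ᶜ) (hperf : ∀ h ≠ v, ∃ m ≠ v, G.Adj h m) :
    ∃ p q, p ≠ v ∧ q ≠ v ∧ G.Adj p q ∧ ∀ y, G.Adj v y → y = p ∨ y = q := by
  by_cases hvp : ∃ p, G.Adj v p
  · obtain ⟨p, hvp⟩ := hvp
    obtain ⟨q, hqv, hpq⟩ := hperf p hvp.ne.symm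
    refine ⟨p, q, hvp.ne.symm, hqv, hpq, fun y hvy => ?_⟩
    by_contra! hy
    obtain ⟨m, hmv, hym⟩ := hperf y hvy.ne.symm
    have hmp : m ≠ p := by
      rintro rfl
      exact hy.2 (hv hvp.ne.symm hqv hvy.ne.symm hpq hym.symm).symm
    have hmq : m ≠ q := by
      rintro rfl
      exact hy.1 (hv hqv hvp.ne.symm hvy.ne.symm hpq.symm hym.symm).symm
    exact hP5 m y v p q (by grind [Adj.ne]) hym.symm hvy.symm hvp hpq
  · push Not at hvp
    obtain ⟨p, hpv⟩ := exists_ne v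
    obtain ⟨q, hqv, hpq⟩ := hperf p hpv
    exact ⟨p, q, hpv, hqv, hpq, fun y hvy => (hvp y hvy).elim⟩

theorem kipas_isContained_compl_of_perfect (hP5 : G.FreeOfP5) (hn : 5 ≤ n)
    (hV : Fintype.card V = n + 2) {v : V} (hv : G.IsMatchingOn {v}ᶜ)
    (hperf : ∀ h ≠ v, ∃ m ≠ v, G.Adj h m) : kipas n ⊑ Gᶜ := by
  have : Nontrivial V := Fintype.one_lt_card_iff_nontrivial.1 (by omega)
  obtain ⟨p, q, hpv, hqv, hpq, hvpq⟩ := exists_adj_forall_adj_eq_or_eq hP5 hv hperf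
  obtain ⟨h, hh⟩ := [v, p, q].exists_notMem_of_length_lt_card
    (by simp only [List.length_cons, List.length_nil]; omega)
  simp only [List.mem_cons, List.not_mem_nil, or_false, not_or] at hh
  obtain ⟨m, hmv, hhm⟩ := hperf h hh.1
  have hmp : m ≠ p := by
    rintro rfl
    exact hh.2.2 (hv hpv hqv hh.1 hpq hhm.symm).symm
  have hmq : m ≠ q := by
    rintro rfl
    exact hh.2.1 (hv hqv hpv hh.1 hpq.symm hhm.symm).symm
  apply kipas_isContained_compl_of_terminals hn hV
    (h := h) (x := m) (t₁ := v) (t₂ := p) (t₃ := q)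
  · grind [Adj.ne]
  · intro y hyh hym hhy
    by_cases hyv : y = v
    · exact (hvpq h (hyv ▸ hhy.symm)).elim hh.2.1 hh.2.2
    · exact hym (hv hh.1 hyv hmv hhy hhm)
  · exact hv.mono (by simp)
  · intro t ht y hy hty
    simp only [mem_compl, mem_insert, mem_singleton, not_or] at hy
    obtain ⟨-, -, hyv, hyp, hyq⟩ := hy
    simp only [List.mem_cons, List.not_mem_nil, or_false] at ht
    rcases ht with rfl | rfl | rfl
    · exact (hvpq y hty).elim hyp hyq
    · exact hyq (hv hpv hyv hqv hty hpq)
    · exact hyp (hv hqv hyv hpv hty hpq.symm)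

theorem kipas_isContained_compl_of_forall_mem (hn : 5 ≤ n) (hV : Fintype.card V = n + 2)
    {a b c d : V} (habcd : [a, b, c, d].Nodup) (hG : ∀ x y, G.Adj x y → x ∈ [a, b, c, d]) :
    kipas n ⊑ Gᶜ := by
  obtain ⟨h, hh⟩ := [a, b, c, d].exists_notMem_of_length_lt_card
    (by simp only [List.length_cons, List.length_nil]; omega)
  have hout {x : V} (hx : x ∉ [a, b, c, d]) (y : V) : ¬G.Adj x y := fun hxy => hx (hG x y hxy)
  apply kipas_isContained_compl_of_terminals hn hV
    (h := h) (x := d) (t₁ := a) (t₂ := b) (t₃ := c)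
  · grind
  · exact fun y _ _ => hout hh y
  · intro x y z hx _ _ hxy _
    exact (hout (by grind [mem_compl, coe_compl]) y hxy).elim
  · intro t _ y hy hty
    exact hout (by grind [mem_compl]) t hty.symm

theorem kipas_isContained_compl_of_isMatchingOn (hP5 : G.FreeOfP5) (hn : 5 ≤ n)
    (hV : Fintype.card V = n + 2) {v : V} (hv : G.IsMatchingOn {v}ᶜ) : kipas n ⊑ Gᶜ := by
  by_cases hiso : ∃ h ≠ v, ∀ y, y ≠ v → ¬G.Adj h y
  · obtain ⟨h, hhv, hh⟩ := hiso
    exact kipas_isContained_compl_of_isolated (by omega) hV hv hhv hh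
  · push Not at hiso
    exact kipas_isContained_compl_of_perfect hP5 hn hV hv hiso

theorem kipas_isContained_compl (hP5 : G.FreeOfP5) (h2P3 : G.FreeOf2P3) (hP4P2 : G.FreeOfP4P2)
    (hn : 5 ≤ n) (hV : Fintype.card V = n + 2) : kipas n ⊑ Gᶜ := by
  have : Nonempty V := Fintype.card_pos_iff.1 (by omega)
  rcases exists_isMatchingOn_compl_or_forall_mem hP5 h2P3 hP4P2 with
    ⟨v, hv⟩ | ⟨a, b, c, d, habcd, hG⟩
  · exact kipas_isContained_compl_of_isMatchingOn hP5 hn hV hv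
  · exact kipas_isContained_compl_of_forall_mem hn hV habcd hG

end Fintype

end SimpleGraph

/-- The edges of colour `c`; asking for colour `c` in both directions makes this a simple graph
without assuming `χ` symmetric. -/
def colorGraph {V C : Type*} (χ : V → V → C) (c : C) : SimpleGraph V where
  Adj u v := u ≠ v ∧ χ u v = c ∧ χ v u = c
  symm := ⟨fun _ _ h => ⟨h.1.symm, h.2.2, h.2.1⟩⟩

theorem colorGraph_adj {V C : Type*} {χ : V → V → C} {c : C} {u v : V} :
    (colorGraph χ c).Adj u v ↔ u ≠ v ∧ χ u v = c ∧ χ v u = c :=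
  Iff.rfl

theorem HasMonoCopy.of_isContained {α V C : Type*} {H : SimpleGraph α} {χ : V → V → C}
    {c : C} (h : H ⊑ colorGraph χ c) : HasMonoCopy H χ c :=
  let ⟨f⟩ := h
  ⟨f.toEmbedding, fun _ _ hab => (colorGraph_adj.1 (f.toHom.map_adj hab)).2.1⟩

theorem compl_colorGraph_false_le {V : Type*} {χ : V → V → Bool}
    (hsym : ∀ u v, χ u v = χ v u) : (colorGraph χ false)ᶜ ≤ colorGraph χ true := by
  rintro u v ⟨huv, h⟩
  simp_all [colorGraph_adj, hsym v u]

/-- For `n ≥ 5`, any red/blue coloring of `K_{n+2}` (red = `true`) without a red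
kipas `K̂ₙ` contains a blue `2P₃`, a blue `P₅`, or a blue `P₄ ∪ P₂`. -/
theorem blue_2P3_or_P5_or_P4P2 (n : ℕ) (hn : 5 ≤ n)
    (χ : Fin (n+2) → Fin (n+2) → Bool) (hsym : ∀ u v, χ u v = χ v u)
    (hred : ¬ HasMonoCopy (kipas n) χ true) :
    (∃ a b c d e f : Fin (n+2), [a, b, c, d, e, f].Nodup ∧
      χ a b = false ∧ χ b c = false ∧ χ d e = false ∧ χ e f = false) ∨
    (∃ a b c d e : Fin (n+2), [a, b, c, d, e].Nodup ∧
      χ a b = false ∧ χ b c = false ∧ χ c d = false ∧ χ d e = false) ∨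
    (∃ a b c d e f : Fin (n+2), [a, b, c, d, e, f].Nodup ∧
      χ a b = false ∧ χ b c = false ∧ χ c d = false ∧ χ e f = false) := by
  by_contra hcon
  simp only [not_or, not_exists, not_and] at hcon
  obtain ⟨h2P3, hP5, hP4P2⟩ := hcon
  have blue {u v} (h : (colorGraph χ false).Adj u v) : χ u v = false := (colorGraph_adj.1 h).2.1
  refine hred (.of_isContained ((kipas_isContained_compl (G := colorGraph χ false)
    ?_ ?_ ?_ hn (by simp)).mono_right (compl_colorGraph_false_le hsym)))
  · exact fun a b c d e hnd h₁ h₂ h₃ h₄ =>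
      hP5 a b c d e hnd (blue h₁) (blue h₂) (blue h₃) (blue h₄)
  · exact fun a b c d e f hnd h₁ h₂ h₃ h₄ =>
      h2P3 a b c d e f hnd (blue h₁) (blue h₂) (blue h₃) (blue h₄)
  · exact fun a b c d e f hnd h₁ h₂ h₃ h₄ =>
      hP4P2 a b c d e f hnd (blue h₁) (blue h₂) (blue h₃) (blue h₄)
end

section
/- For every n ≥ 5 and odd n, there is a 3-edge-coloring of K_{⌊5n/2⌋−1} in the class 𝓑_3 with no monochromatic kipas K̂_n. Concretely: partition the vertices into A, B_1, B_2, B_3 with |A| = n and |B_1| = |B_2| = |B_3| = (n−1)/2; color all edges inside A with color 3, all edges between A and B_1∪B_2∪B_3 with color 1, all edges between distinct B_i's with color 2, and all edges inside each B_i with color 1. Then this coloring contains no monochromatic K̂_n. -/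
/-!
In colour 3 a monochromatic kipas lies inside `A`, which has only `n` vertices. In colour 2 the hub
lies in some `Bᵢ` and the `n` path vertices avoid `A ∪ Bᵢ`, leaving only `n - 1` vertices. In
colour 1, a hub in `A` forces the whole path into a single `Bᵢ`, of size `(n - 1) / 2`; a hub in
`Bᵢ` forces every path vertex into `A ∪ Bᵢ`, and as no two consecutive path vertices lie in `A`,
at least `(n + 1) / 2` vertices of the kipas lie in `Bᵢ`.
-/

open SimpleGraph Finset

/-- The class `𝓑₃(N)` of 3-edge-colorings of `K_N` (colors `1, 2, 3`): the vertices split into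
two parts `A` and `B = Aᶜ`, each of size at least `2`; edges between `A` and `B` have color `1`,
edges inside `A` have color `1` or `3`, and edges inside `B` have color `1` or `2`. -/
def B3Coloring {N : ℕ} (χ : Fin N → Fin N → ℕ) : Prop :=
  ∃ A : Finset (Fin N), 2 ≤ A.card ∧ 2 ≤ Aᶜ.card ∧
    (∀ u ∈ A, ∀ v ∈ Aᶜ, χ u v = 1) ∧
    (∀ u ∈ A, ∀ v ∈ A, u ≠ v → χ u v = 1 ∨ χ u v = 3) ∧
    (∀ u ∈ Aᶜ, ∀ v ∈ Aᶜ, u ≠ v → χ u v = 1 ∨ χ u v = 2)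

theorem HasMonoCopy.of_forall_ne_eq {α V C : Type*} {H : SimpleGraph α} {χ χ' : V → V → C}
    {c : C} (hχ : ∀ u v, u ≠ v → χ u v = χ' u v) (h : HasMonoCopy H χ c) :
    HasMonoCopy H χ' c := by
  obtain ⟨f, hf⟩ := h
  exact ⟨f, fun a b hab => hχ _ _ (f.injective.ne hab.ne) ▸ hf a b hab⟩

section Kipas

variable {n : ℕ}

theorem kipas_adj_last {a : Fin (n + 1)} (ha : a.val < n) : (kipas n).Adj a (Fin.last n) := by
  simp [kipas, fromRel_adj, ha, Fin.ext_iff, ha.ne]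

theorem kipas_adj_of_val_succ_eq {a b : Fin (n + 1)} (hab : a.val + 1 = b.val) (hb : b.val < n) :
    (kipas n).Adj a b := by
  simp only [kipas, fromRel_adj]
  exact ⟨fun h => by simp [h] at hab, Or.inl (Or.inl ⟨hab, hb⟩)⟩

theorem kipas_exists_adj (hn : 0 < n) (a : Fin (n + 1)) : ∃ b, (kipas n).Adj a b := by
  rcases a.is_le.lt_or_eq with ha | ha
  · exact ⟨_, kipas_adj_last ha⟩
  · obtain rfl : a = Fin.last n := Fin.ext ha
    exact ⟨_, (kipas_adj_last (a := ⟨0, by omega⟩) hn).symm⟩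

end Kipas

theorem Finset.card_le_of_forall_succ_notMem {n : ℕ} (S : Finset ℕ) (hlt : ∀ s ∈ S, s < n)
    (h : ∀ s ∈ S, s + 1 ∉ S) : #S ≤ (n + 1) / 2 := by
  calc #S ≤ #(range ((n + 1) / 2)) := by
        refine card_le_card_of_injOn (· / 2) (fun s hs => ?_) fun s hs t ht hst => ?_
        · have := hlt s hs
          simp only [coe_range, Set.mem_Iio]
          omega
        · by_contra hne
          rcases Nat.lt_or_gt_of_ne hne with hst' | hts
          · exact h s hs (show t = s + 1 by simp at hst; omega ▸ ht)
          · exact h t ht (show s = t + 1 by simp at hst; omega ▸ hs)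
    _ = (n + 1) / 2 := card_range _

theorem Finset.card_filter_ne_ne_add {V ι : Type*} [Fintype V] [DecidableEq ι] (Q : V → ι)
    {i j : ι} (hij : i ≠ j) :
    #{v | Q v ≠ i ∧ Q v ≠ j} + #{v | Q v = i} + #{v | Q v = j} = Fintype.card V := by
  have hi := card_filter_add_card_filter_not (s := univ) (fun v => Q v = i)
  have hj := card_filter_add_card_filter_not (s := {v | Q v ≠ i}) (fun v => Q v = j)
  have hji : (univ.filter fun v => ¬Q v = i ∧ Q v = j) = univ.filter fun v => Q v = j :=
    filter_congr fun v _ => ⟨And.right, fun h => ⟨h ▸ hij.symm, h⟩⟩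
  simp only [filter_filter, ne_eq, hji, card_univ] at hi hj ⊢
  omega

section BlockColor

variable {ι : Type*} [DecidableEq ι] [Zero ι]

/-- Part `0` is `A`; the other parts are the `Bᵢ`. -/
def blockColor (a b : ι) : ℕ :=
  if a = 0 ∧ b = 0 then 3 else if a = 0 ∨ b = 0 then 1 else if a = b then 1 else 2

variable {a b : ι}

theorem blockColor_eq_three : blockColor a b = 3 ↔ a = 0 ∧ b = 0 := by
  unfold blockColor; split_ifs <;> simp <;> tauto

theorem blockColor_eq_two : blockColor a b = 2 ↔ a ≠ 0 ∧ b ≠ 0 ∧ a ≠ b := by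
  unfold blockColor; split_ifs <;> simp <;> tauto

theorem blockColor_eq_one : blockColor a b = 1 ↔ (a = 0 ∨ b = 0 ∨ a = b) ∧ ¬(a = 0 ∧ b = 0) := by
  unfold blockColor; split_ifs <;> simp <;> tauto

theorem blockColor_eq_one_or_two_or_three :
    blockColor a b = 1 ∨ blockColor a b = 2 ∨ blockColor a b = 3 := by
  unfold blockColor; split_ifs <;> simp

end BlockColor

theorem b3Coloring_of_blockColor {ι : Type*} [DecidableEq ι] [Zero ι] {N : ℕ} {Q : Fin N → ι}
    {χ : Fin N → Fin N → ℕ} (hχ : ∀ u v, u ≠ v → χ u v = blockColor (Q u) (Q v))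
    (hA : 2 ≤ #{v | Q v = 0}) (hB : 2 ≤ #({v | Q v = 0} : Finset (Fin N))ᶜ) : B3Coloring χ := by
  refine ⟨({v | Q v = 0} : Finset (Fin N)), hA, hB, fun u hu v hv => ?_, fun u hu v hv huv => ?_,
    fun u hu v hv huv => ?_⟩ <;> simp only [mem_compl, mem_filter, mem_univ, true_and] at hu hv
  · rw [hχ u v (by rintro rfl; exact hv hu), blockColor_eq_one]
    simp [hu, hv]
  · exact Or.inr (hχ u v huv ▸ blockColor_eq_three.2 ⟨hu, hv⟩)
  · rw [hχ u v huv, blockColor_eq_one, blockColor_eq_two]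
    tauto

section MonoKipas

variable {V ι : Type*} [Fintype V] [DecidableEq ι] [Zero ι] {Q : V → ι} {n : ℕ}
  {f : Fin (n + 1) ↪ V}

theorem succ_le_card_zero_of_kipas_three (hn : 0 < n)
    (hf : ∀ a b, (kipas n).Adj a b → blockColor (Q (f a)) (Q (f b)) = 3) :
    n + 1 ≤ #{v | Q v = 0} := by
  have hA : ∀ a, Q (f a) = 0 := fun a => by
    obtain ⟨b, hab⟩ := kipas_exists_adj hn a
    exact (blockColor_eq_three.1 (hf a b hab)).1
  simpa using card_le_card_of_injOn f (s := univ) (fun a _ => by simp [hA a]) f.injective.injOn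

theorem exists_add_card_le_of_kipas_two (hn : 0 < n)
    (hf : ∀ a b, (kipas n).Adj a b → blockColor (Q (f a)) (Q (f b)) = 2) :
    ∃ i ≠ 0, n + #{v | Q v = 0} + #{v | Q v = i} ≤ Fintype.card V := by
  have hspoke (j : Fin n) := blockColor_eq_two.1 (hf _ _ (kipas_adj_last (a := j.castSucc) j.isLt))
  have hhub : Q (f (Fin.last n)) ≠ 0 := (hspoke ⟨0, hn⟩).2.1
  refine ⟨_, hhub, ?_⟩
  have hpath := card_le_card_of_injOn (fun j : Fin n => f j.castSucc) (s := univ)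
    (t := {v | Q v ≠ 0 ∧ Q v ≠ Q (f (Fin.last n))}) (fun j _ => by simp [hspoke j])
    (f.injective.comp (Fin.castSucc_injective n)).injOn
  have hparts := card_filter_ne_ne_add Q hhub.symm
  simp only [card_univ, Fintype.card_fin] at hpath
  omega

theorem exists_le_card_of_kipas_one_of_hub_eq_zero (hn : 0 < n)
    (hf : ∀ a b, (kipas n).Adj a b → blockColor (Q (f a)) (Q (f b)) = 1)
    (hhub : Q (f (Fin.last n)) = 0) :
    ∃ i ≠ 0, n ≤ #{v | Q v = i} := by
  have hpath (k : ℕ) (hk : k < n) : Q (f ⟨k, by omega⟩) ≠ 0 := fun h0 =>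
    (blockColor_eq_one.1 (hf _ _ (kipas_adj_last (a := ⟨k, by omega⟩) hk))).2 ⟨h0, hhub⟩
  have hconst (k : ℕ) (hk : k < n) : Q (f ⟨k, by omega⟩) = Q (f ⟨0, by omega⟩) := by
    induction k with
    | zero => rfl
    | succ k ih =>
      have hedge := blockColor_eq_one.1
        (hf ⟨k, by omega⟩ ⟨k + 1, by omega⟩ (kipas_adj_of_val_succ_eq rfl hk))
      have := hpath k (by omega)
      have := hpath (k + 1) hk
      rw [← ih (by omega)]
      tauto
  refine ⟨_, hpath 0 hn, ?_⟩
  simpa using card_le_card_of_injOn (fun j : Fin n => f j.castSucc) (s := univ)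
    (t := {v | Q v = Q (f ⟨0, by omega⟩)})
    (fun j _ => mem_coe.2 (mem_filter.2 ⟨mem_univ _, hconst j j.isLt⟩))
    (f.injective.comp (Fin.castSucc_injective n)).injOn

theorem succ_le_card_of_kipas_one_of_hub_ne_zero
    (hf : ∀ a b, (kipas n).Adj a b → blockColor (Q (f a)) (Q (f b)) = 1)
    (hhub : Q (f (Fin.last n)) ≠ 0) :
    n + 1 ≤ (n + 1) / 2 + #{v | Q v = Q (f (Fin.last n))} := by
  have hlt (a : Fin (n + 1)) (ha : Q (f a) = 0) : a.val < n :=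
    a.is_le.lt_of_ne fun h => hhub (Fin.ext (b := Fin.last n) h ▸ ha)
  -- edges inside `A` have colour 3, so no two consecutive path vertices lie in `A`
  have hA : #(univ.filter fun a => Q (f a) = 0) ≤ (n + 1) / 2 := by
    rw [← card_map Fin.valEmbedding]
    refine card_le_of_forall_succ_notMem _ (fun s hs => ?_) fun s hs hs1 => ?_ <;>
      simp only [mem_map, mem_filter, mem_univ, true_and, Fin.valEmbedding_apply] at hs
    · obtain ⟨a, ha, rfl⟩ := hs
      exact hlt a ha
    · obtain ⟨a, ha, rfl⟩ := hs
      simp only [mem_map, mem_filter, mem_univ, true_and, Fin.valEmbedding_apply] at hs1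
      obtain ⟨b, hb, hab⟩ := hs1
      exact (blockColor_eq_one.1 (hf a b (kipas_adj_of_val_succ_eq hab.symm (hlt b hb)))).2 ⟨ha, hb⟩
  have hB : #(univ.filter fun a => ¬Q (f a) = 0) ≤ #{v | Q v = Q (f (Fin.last n))} := by
    refine card_le_card_of_injOn f (fun a ha => ?_) f.injective.injOn
    simp only [coe_filter, Set.mem_ofPred_eq, mem_univ, true_and] at ha ⊢
    rcases a.is_le.lt_or_eq with han | han
    · have := blockColor_eq_one.1 (hf _ _ (kipas_adj_last han))
      tauto
    · rw [show a = Fin.last n from Fin.ext han]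
  have hsplit := card_filter_add_card_filter_not (s := univ) (fun a => Q (f a) = 0)
  simp only [card_univ, Fintype.card_fin] at hsplit
  omega

theorem exists_large_part_of_hasMonoCopy_kipas (hn : 0 < n) {c : ℕ}
    (h : HasMonoCopy (kipas n) (fun u v => blockColor (Q u) (Q v)) c) :
    n + 1 ≤ #{v | Q v = 0} ∨ (∃ i ≠ 0, n + #{v | Q v = 0} + #{v | Q v = i} ≤ Fintype.card V) ∨
      ∃ i ≠ 0, n / 2 + 1 ≤ #{v | Q v = i} := by
  obtain ⟨f, hf⟩ := h
  have hc : blockColor (Q (f ⟨0, by omega⟩)) (Q (f (Fin.last n))) = c :=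
    hf _ _ (kipas_adj_last (a := ⟨0, by omega⟩) hn)
  obtain rfl | rfl | rfl : c = 1 ∨ c = 2 ∨ c = 3 := hc ▸ blockColor_eq_one_or_two_or_three
  · by_cases hhub : Q (f (Fin.last n)) = 0
    · obtain ⟨i, hi, hle⟩ := exists_le_card_of_kipas_one_of_hub_eq_zero hn hf hhub
      exact Or.inr (Or.inr ⟨i, hi, by omega⟩)
    · have := succ_le_card_of_kipas_one_of_hub_ne_zero hf hhub
      exact Or.inr (Or.inr ⟨_, hhub, by omega⟩)
  · exact Or.inr (Or.inl (exists_add_card_le_of_kipas_two hn hf))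
  · exact Or.inl (succ_le_card_zero_of_kipas_three hn hf)

end MonoKipas

/-- For odd `n ≥ 5`, partition the `⌊5n/2⌋ - 1` vertices into parts `A` (the
fiber of `Q` over `0`, of size `n`) and `B₁, B₂, B₃` (fibers over `1, 2, 3`, each of size
`(n-1)/2`); color edges inside `A` with `3`, edges meeting `A` and its complement with `1`,
edges between distinct `Bᵢ`'s with `2`, and edges inside each `Bᵢ` with `1`. This coloring lies
in `𝓑₃` and has no monochromatic kipas `K̂ₙ`. -/
theorem b3_kipas_lower_construction (n : ℕ) (hn : 5 ≤ n) (hodd : Odd n)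
    (Q : Fin (5 * n / 2 - 1) → Fin 4)
    (hA : (Finset.univ.filter (fun v => Q v = 0)).card = n)
    (hB : ∀ i : Fin 4, i ≠ 0 → (Finset.univ.filter (fun v => Q v = i)).card = (n - 1) / 2)
    (χ : Fin (5 * n / 2 - 1) → Fin (5 * n / 2 - 1) → ℕ)
    (hχ : ∀ u v, u ≠ v → χ u v =
      if Q u = 0 ∧ Q v = 0 then 3
      else if Q u = 0 ∨ Q v = 0 then 1
      else if Q u = Q v then 1
      else 2) :
    B3Coloring χ ∧ ¬ ∃ c, HasMonoCopy (kipas n) χ c := by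
  have hχ' : ∀ u v, u ≠ v → χ u v = blockColor (Q u) (Q v) := hχ
  obtain ⟨m, rfl⟩ := hodd
  have hBm (i : Fin 4) (hi : i ≠ 0) : #{v | Q v = i} = m := by rw [hB i hi]; omega
  have hV : Fintype.card (Fin (5 * (2 * m + 1) / 2 - 1)) = 5 * m + 1 := by
    rw [Fintype.card_fin]; omega
  refine ⟨b3Coloring_of_blockColor hχ' (by omega) ?_, ?_⟩
  · rw [card_compl, hA, hV]; omega
  rintro ⟨c, hc⟩
  rcases exists_large_part_of_hasMonoCopy_kipas (by omega) (hc.of_forall_ne_eq hχ') with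
    h3 | ⟨i, hi, h2⟩ | ⟨i, hi, h1⟩
  · omega
  · rw [hBm i hi, hV] at h2; omega
  · rw [hBm i hi] at h1; omega
end
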